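/- Let n and f be natural numbers with f+1 ≤ n, let v : Fin n → ℕ, let B ⊆ Fin n with |B| ≤ f, and let lst be the (f+1)-st minimum of v, i.e., the entry at position f (0-indexed) of the nondecreasing rearrangement of v. Then there exists an index i ∉ B with v i ≤ lst; that is, the (f+1)-st minimum of the version vector is an upper bound on the reported clock value of at least one correct replica, even when up to f entries are controlled by Byzantine replicas. -/

import Mathlib

/-!
The first `f + 1` entries of the sorted vector are all at most its entry at position `f`, so at
least `f + 1` replicas report a value `≤ lst`; since at most `f` replicas are Byzantine, one of
them is correct.
-/

open Finset

theorem List.Pairwise.succ_le_countP_le_getElem {α : Type*} [Preorder α] [DecidableLE α]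
    {l : List α} (hl : l.Pairwise (· ≤ ·)) {k : ℕ} (hk : k < l.length) :
    k + 1 ≤ l.countP (· ≤ l[k]) := by
  have htake : ∀ a ∈ l.take (k + 1), a ≤ l[k] := by
    intro a ha
    obtain ⟨j, hj, rfl⟩ := List.mem_iff_getElem.mp ha
    rw [List.getElem_take]
    exact hl.rel_get_of_le (by simp only [List.length_take] at hj; simp only [Fin.le_def]; omega)
  calc k + 1 = (l.take (k + 1)).countP (· ≤ l[k]) := by
        rw [List.countP_eq_length.mpr (by simpa using htake), List.length_take]; omega
    _ ≤ l.countP (· ≤ l[k]) := (List.take_sublist _ _).countP_le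

theorem List.countP_ofFn {α : Type*} {n : ℕ} (v : Fin n → α) (p : α → Prop) [DecidablePred p] :
    (List.ofFn v).countP (p ·) = #{i | p (v i)} := by
  rw [← Multiset.coe_countP, ← Fin.univ_val_map, Multiset.countP_map, card_def, filter_val]

/-- The `(f+1)`-st minimum `lst` of a vector `v` of `n ≥ f+1` clock values
(the entry at 0-indexed position `f` of the nondecreasing rearrangement of
`v`) upper-bounds the value of at least one correct replica, even when up
to `f` of the entries are controlled by Byzantine replicas `B`. -/
theorem fst_plus_one_minimum_bounds_correct (n f : ℕ) (hfn : f + 1 ≤ n)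
    (v : Fin n → ℕ) (B : Finset (Fin n)) (hB : B.card ≤ f) (lst : ℕ)
    (hlst : lst = ((List.ofFn v).mergeSort (fun a b => a ≤ b)).getD f 0) :
    ∃ i : Fin n, i ∉ B ∧ v i ≤ lst := by
  set l := (List.ofFn v).mergeSort (fun a b => a ≤ b)
  have hperm : l.Perm (List.ofFn v) := List.mergeSort_perm _ _
  have hf : f < l.length := by simpa [hperm.length_eq] using hfn
  have hlst_get : lst = l[f] := by rw [hlst, List.getD_eq_getElem _ _ hf]
  have hcount : f + 1 ≤ #{i | v i ≤ lst} := by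
    have := (List.pairwise_mergeSort' (· ≤ ·) (List.ofFn v)).succ_le_countP_le_getElem hf
    rwa [← hlst_get, hperm.countP_eq, List.countP_ofFn] at this
  obtain ⟨i, hi, hiB⟩ :=
    exists_mem_notMem_of_card_lt_card (s := B) (t := {i | v i ≤ lst}) (by omega)
  exact ⟨i, hiB, (mem_filter.mp hi).2⟩
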